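/- arXiv:1804.01207 — 3 statements merged into one kernel-verified Lean document; each statement's English description precedes it below -/
import Mathlib

section
/- (Round trip lemma, part 2: invariance of the mean) Let N ≥ 1, let A be a finite alphabet, and let C : ZMod N → A be a cycle. Then ∑_{j : ZMod N} Δ_C(j) = N · |range C|, where |range C| is the number of distinct symbols attained by C. Equivalently, the mean μ(C) = (1/N)·∑_j Δ_C(j) is an integer equal to the number of distinct symbols appearing in the cycle, independently of how the symbols are arranged. -/
open Finset

/-- The distance from position `j` to the next occurrence of the same symbol:
the least positive `d` with `C (j + d) = C j`. -/
noncomputable def cycleDist {N : ℕ} {A : Type*} (C : ZMod N → A) (j : ZMod N) : ℕ :=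
  sInf {d : ℕ | 0 < d ∧ C (j + (d : ZMod N)) = C j}

/-- A cycle is admissible for multiplicities `m` if every fiber has the prescribed size. -/
def Admissible {N : ℕ} [NeZero N] {A : Type*} [Fintype A] [DecidableEq A]
    (m : A → ℕ) (C : ZMod N → A) : Prop :=
  ∀ a : A, (Finset.univ.filter (fun j => C j = a)).card = m a

/-- The mean of a cycle. -/
noncomputable def cycleMean {N : ℕ} [NeZero N] {A : Type*} (C : ZMod N → A) : ℚ :=
  (∑ j : ZMod N, (cycleDist C j : ℚ)) / N

/-- The second (raw) moment of a cycle. -/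
noncomputable def cycleMoment2 {N : ℕ} [NeZero N] {A : Type*} (C : ZMod N → A) : ℚ :=
  (∑ j : ZMod N, (cycleDist C j : ℚ) ^ 2) / N

/-- The variance of a cycle. -/
noncomputable def cycleVariance {N : ℕ} [NeZero N] {A : Type*} (C : ZMod N → A) : ℚ :=
  (∑ j : ZMod N, ((cycleDist C j : ℚ) - cycleMean C) ^ 2) / N


/-!
Count the pairs `(j, i)` for which `j` is the last position strictly before `i` (going backwards
around the cycle) carrying the symbol `C j`. For fixed `j` these are the `i` in
`j + 1, …, j + Δ(j)`, so there are `Δ(j)` of them; for fixed `i` there is exactly one such `j`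
per symbol in the range of `C`, namely its last occurrence before `i`.
-/

section Distances

variable {N : ℕ} {A : Type*} (C : ZMod N → A)

noncomputable def backDist (i : ZMod N) (a : A) : ℕ :=
  sInf {t : ℕ | 0 < t ∧ C (i - (t : ZMod N)) = a}

theorem cycleDist_le {j : ZMod N} {t : ℕ} (ht : 0 < t) (h : C (j + (t : ZMod N)) = C j) :
    cycleDist C j ≤ t :=
  Nat.sInf_le ⟨ht, h⟩

theorem backDist_le {i : ZMod N} {a : A} {t : ℕ} (ht : 0 < t) (h : C (i - (t : ZMod N)) = a) :
    backDist C i a ≤ t :=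
  Nat.sInf_le ⟨ht, h⟩

variable [NeZero N]

theorem cycleDist_spec (j : ZMod N) :
    0 < cycleDist C j ∧ C (j + (cycleDist C j : ZMod N)) = C j :=
  Nat.sInf_mem (s := {d | 0 < d ∧ C (j + (d : ZMod N)) = C j})
    ⟨N, Nat.pos_of_neZero N, by simp⟩

theorem backDist_spec {i : ZMod N} {a : A} (ha : a ∈ Set.range C) :
    0 < backDist C i a ∧ C (i - (backDist C i a : ZMod N)) = a := by
  obtain ⟨k, rfl⟩ := ha
  have hN := Nat.pos_of_neZero N
  exact Nat.sInf_mem (s := {t | 0 < t ∧ C (i - (t : ZMod N)) = C k})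
    ⟨N + (i - k).val, by omega, by simp⟩

theorem backDist_add_of_le_cycleDist {j : ZMod N} {s : ℕ} (hs : 0 < s)
    (hsj : s ≤ cycleDist C j) :
    backDist C (j + (s : ZMod N)) (C j) = s := by
  refine (backDist_le C hs (by simp)).antisymm (not_lt.mp fun hlt => ?_)
  set d := backDist C (j + (s : ZMod N)) (C j)
  have hback : C (j + ((s - d : ℕ) : ZMod N)) = C j := by
    rw [Nat.cast_sub hlt.le, ← add_sub_assoc]
    exact (backDist_spec C (Set.mem_range_self j)).2
  have := cycleDist_le C (Nat.sub_pos_of_lt hlt) hback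
  have := (backDist_spec C (i := j + (s : ZMod N)) (Set.mem_range_self j)).1
  omega

theorem backDist_le_cycleDist {i j : ZMod N} (h : i - (backDist C i (C j) : ZMod N) = j) :
    backDist C i (C j) ≤ cycleDist C j := by
  refine not_lt.mp fun hlt => ?_
  set d := backDist C i (C j)
  have hback : C (i - ((d - cycleDist C j : ℕ) : ZMod N)) = C j := by
    rw [Nat.cast_sub hlt.le, sub_sub_eq_add_sub, add_sub_right_comm, h]
    exact (cycleDist_spec C j).2
  have := backDist_le C (Nat.sub_pos_of_lt hlt) hback
  have := (cycleDist_spec C j).1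
  omega

theorem card_filter_sub_backDist_eq_cycleDist (j : ZMod N) :
    #{i | i - (backDist C i (C j) : ZMod N) = j} = cycleDist C j := by
  rw [show cycleDist C j = #(Icc 1 (cycleDist C j)) by simp]
  refine card_bij' (fun i _ => backDist C i (C j)) (fun s _ => j + (s : ZMod N))
    (fun i hi => ?_) (fun s hs => ?_) (fun i hi => ?_) (fun s hs => ?_)
  · rw [mem_filter] at hi
    exact mem_Icc.mpr ⟨(backDist_spec C (Set.mem_range_self j)).1, backDist_le_cycleDist C hi.2⟩
  · rw [mem_Icc] at hs
    simp [backDist_add_of_le_cycleDist C hs.1 hs.2]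
  · exact (sub_eq_iff_eq_add.mp (mem_filter.mp hi).2).symm
  · rw [mem_Icc] at hs
    exact backDist_add_of_le_cycleDist C hs.1 hs.2

end Distances

section Counting

variable {N : ℕ} [NeZero N] {A : Type*} [DecidableEq A] (C : ZMod N → A)

theorem card_filter_sub_backDist_eq_card_image (i : ZMod N) :
    #{j | i - (backDist C i (C j) : ZMod N) = j} = #(univ.image C) := by
  refine card_bij' (fun j _ => C j) (fun a _ => i - (backDist C i a : ZMod N))
    (fun j _ => mem_image_of_mem C (mem_univ j)) (fun a ha => ?_)
    (fun j hj => (mem_filter.mp hj).2) (fun a ha => ?_) <;>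
  obtain ⟨k, -, rfl⟩ := mem_image.mp ha
  · simp [(backDist_spec C (Set.mem_range_self k)).2]
  · exact (backDist_spec C (Set.mem_range_self k)).2

theorem sum_cycleDist : ∑ j, cycleDist C j = N * #(univ.image C) := by
  have := sum_card_bipartiteAbove_eq_sum_card_bipartiteBelow (s := univ) (t := univ)
    (r := fun j i : ZMod N => i - (backDist C i (C j) : ZMod N) = j)
  simp only [bipartiteAbove, bipartiteBelow, card_filter_sub_backDist_eq_cycleDist,
    card_filter_sub_backDist_eq_card_image] at this
  rw [this, sum_const, card_univ, ZMod.card, smul_eq_mul]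

end Counting

theorem round_trip_part2_general {N : ℕ} [NeZero N] {A : Type*} [DecidableEq A]
    (C : ZMod N → A) :
    (∑ j : ZMod N, cycleDist C j = N * (Finset.univ.image C).card) ∧
    cycleMean C = ((Finset.univ.image C).card : ℚ) := by
  refine ⟨sum_cycleDist C, ?_⟩
  have hN : (N : ℚ) ≠ 0 := Nat.cast_ne_zero.mpr (NeZero.ne N)
  rw [cycleMean, ← Nat.cast_sum, sum_cycleDist, Nat.cast_mul, mul_div_cancel_left₀ _ hN]

/-- Round trip lemma, part 2: the total of all distances is `N` times the number of distinct
symbols attained; equivalently the mean equals the number of distinct symbols. -/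
theorem round_trip_part2 {N : ℕ} [NeZero N] {A : Type*} [Fintype A] [DecidableEq A]
    (C : ZMod N → A) :
    (∑ j : ZMod N, cycleDist C j = N * (Finset.univ.image C).card) ∧
    cycleMean C = ((Finset.univ.image C).card : ℚ) :=
  round_trip_part2_general C
end

section
/- (Distance profile of the more abundant symbol when the less abundant one is unclustered) Let m₁ ≥ m₂ ≥ 1 be natural numbers, N = m₁ + m₂, and let C : ZMod N → {a₁, a₂} be an admissible cycle with fibers of sizes m₁ (for a₁) and m₂ (for a₂). If every instance of a₂ is unclustered (Δ_C(j) ≥ 2 whenever C(j) = a₂), then every instance of a₁ has distance 1 or 2, and exactly m₁ − m₂ instances of a₁ have Δ_C(j) = 1 while exactly m₂ instances of a₁ have Δ_C(j) = 2. -/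
open Finset

/-!
Unclusteredness of `1` means every `1` is followed by a `0`. Hence a `0` has distance `1` if it
is followed by a `0`, and distance `2` if it is followed by a `1` (then a `0` comes next). The
`0`s at distance `2` are thus the predecessors of the `1`s, so there are `m₂` of them, and the
remaining `m₁ - m₂` `0`s have distance `1`.
-/

section cycleDist

variable {N : ℕ} {A : Type*} (C : ZMod N → A) (j : ZMod N)

lemma cycleDist_le_s12 {d : ℕ} (hd : 0 < d) (h : C (j + d) = C j) : cycleDist C j ≤ d :=
  Nat.sInf_le ⟨hd, h⟩

variable [NeZero N]

lemma cycleDist_pos_and_apply_add_cycleDist :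
    0 < cycleDist C j ∧ C (j + (cycleDist C j : ZMod N)) = C j :=
  Nat.sInf_mem (s := {d : ℕ | 0 < d ∧ C (j + (d : ZMod N)) = C j})
    ⟨N, Nat.pos_of_ne_zero (NeZero.ne N), by simp⟩

lemma cycleDist_eq_one_iff : cycleDist C j = 1 ↔ C (j + 1) = C j := by
  obtain ⟨hpos, hret⟩ := cycleDist_pos_and_apply_add_cycleDist C j
  refine ⟨fun h => by simpa [h] using hret, fun h => ?_⟩
  have := cycleDist_le_s12 C j one_pos (by simpa using h)
  omega

lemma cycleDist_eq_two (h1 : C (j + 1) ≠ C j) (h2 : C (j + 2) = C j) : cycleDist C j = 2 := by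
  have hle := cycleDist_le_s12 C j two_pos (by simpa using h2)
  have hpos := (cycleDist_pos_and_apply_add_cycleDist C j).1
  have hne : cycleDist C j ≠ 1 := mt (cycleDist_eq_one_iff C j).mp h1
  omega

end cycleDist

def IsUnclustered {N : ℕ} {A : Type*} (C : ZMod N → A) (a : A) : Prop :=
  ∀ j, C j = a → 2 ≤ cycleDist C j

lemma IsUnclustered.apply_add_one_ne {N : ℕ} [NeZero N] {A : Type*} {C : ZMod N → A} {a : A}
    (hunc : IsUnclustered C a) {j : ZMod N} (hj : C j = a) : C (j + 1) ≠ a := fun h => by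
  have := (cycleDist_eq_one_iff C j).mpr (h.trans hj.symm)
  have := hunc j hj
  omega

namespace IsUnclustered

variable {N : ℕ} [NeZero N] {C : ZMod N → Fin 2} (hunc : IsUnclustered C 1)

include hunc in
lemma apply_add_one_eq_zero {j : ZMod N} (hj : C j = 1) : C (j + 1) = 0 := by
  have := hunc.apply_add_one_ne hj
  omega

include hunc in
lemma cycleDist_eq_one_or_two {j : ZMod N} (hj : C j = 0) :
    cycleDist C j = 1 ∨ cycleDist C j = 2 := by
  rcases Fin.exists_fin_two.mp ⟨C (j + 1), rfl⟩ with h | h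
  · exact Or.inl ((cycleDist_eq_one_iff C j).mpr (h.trans hj.symm))
  · refine Or.inr (cycleDist_eq_two C j (by rw [h, hj]; decide) ?_)
    rw [hj, ← hunc.apply_add_one_eq_zero h, add_assoc, one_add_one_eq_two]

include hunc in
lemma apply_eq_zero_and_cycleDist_eq_two_iff (j : ZMod N) :
    C j = 0 ∧ cycleDist C j = 2 ↔ C (j + 1) = 1 := by
  constructor
  · rintro ⟨hj, hd⟩
    by_contra h
    have := (cycleDist_eq_one_iff C j).mpr (by omega)
    omega
  · intro h
    have hj : C j = 0 := by
      by_contra hj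
      have := hunc.apply_add_one_eq_zero (j := j) (by omega)
      omega
    refine ⟨hj, (hunc.cycleDist_eq_one_or_two hj).resolve_left fun hd => ?_⟩
    have := (cycleDist_eq_one_iff C j).mp hd
    omega

include hunc in
lemma card_cycleDist_eq_two :
    #{j | C j = 0 ∧ cycleDist C j = 2} = #{j | C j = 1} :=
  card_equiv (Equiv.addRight 1) fun j => by
    simp [hunc.apply_eq_zero_and_cycleDist_eq_two_iff]

include hunc in
lemma card_cycleDist_eq_one_add_card_cycleDist_eq_two :
    #{j | C j = 0 ∧ cycleDist C j = 1} + #{j | C j = 0 ∧ cycleDist C j = 2} = #{j | C j = 0} := by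
  rw [← card_union_of_disjoint (disjoint_filter.mpr fun j _ h1 h2 => by omega), ← filter_or]
  congr 1
  ext j
  have := hunc.cycleDist_eq_one_or_two (j := j)
  simp only [mem_filter, mem_univ, true_and]
  tauto

end IsUnclustered

theorem more_abundant_profile_general (m₁ m₂ : ℕ)
    (N : ℕ) [NeZero N]
    (C : ZMod N → Fin 2) (hC : Admissible ![m₁, m₂] C)
    (hunc : ∀ j : ZMod N, C j = 1 → 2 ≤ cycleDist C j) :
    (∀ j : ZMod N, C j = 0 → cycleDist C j = 1 ∨ cycleDist C j = 2) ∧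
    (Finset.univ.filter (fun j => C j = 0 ∧ cycleDist C j = 1)).card = m₁ - m₂ ∧
    (Finset.univ.filter (fun j => C j = 0 ∧ cycleDist C j = 2)).card = m₂ := by
  have hunc : IsUnclustered C 1 := hunc
  have hm₁ : #{j | C j = 0} = m₁ := hC 0
  have hm₂ : #{j | C j = 1} = m₂ := hC 1
  have hsplit := hunc.card_cycleDist_eq_one_add_card_cycleDist_eq_two
  have htwo := hunc.card_cycleDist_eq_two
  exact ⟨fun j => hunc.cycleDist_eq_one_or_two, by omega, htwo.trans hm₂⟩

/-- If the less abundant symbol `a₂` is unclustered in an admissible binary cycle, then every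
instance of `a₁` has distance 1 or 2, with exactly `m₁ − m₂` instances at distance 1 and
exactly `m₂` instances at distance 2. -/
theorem more_abundant_profile (m₁ m₂ : ℕ) (h2 : 1 ≤ m₂) (h12 : m₂ ≤ m₁)
    (N : ℕ) (hN : N = m₁ + m₂) [NeZero N]
    (C : ZMod N → Fin 2) (hC : Admissible ![m₁, m₂] C)
    (hunc : ∀ j : ZMod N, C j = 1 → 2 ≤ cycleDist C j) :
    (∀ j : ZMod N, C j = 0 → cycleDist C j = 1 ∨ cycleDist C j = 2) ∧
    (Finset.univ.filter (fun j => C j = 0 ∧ cycleDist C j = 1)).card = m₁ - m₂ ∧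
    (Finset.univ.filter (fun j => C j = 0 ∧ cycleDist C j = 2)).card = m₂ :=
  more_abundant_profile_general m₁ m₂ N C hC hunc
end

section
/- (Divisible binary case: the repeated block cycle is optimal) Let m₁ ≥ m₂ ≥ 1 be natural numbers with m₂ ∣ m₁, set q = m₁/m₂ and N = m₁ + m₂, and define the cycle C : ZMod N → {a₁, a₂} by C(j) = a₂ if j.val mod (q+1) = q and C(j) = a₁ otherwise (i.e., C repeats the block a₁^q a₂ exactly m₂ times). Then C is admissible with fibers of sizes m₁ and m₂, every instance of a₂ has Δ_C(j) = q + 1 = N/m₂, and C minimizes the variance over all admissible cycles with these multiplicities. -/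
open Finset

/-!
The gaps `Δ(j)` over the occurrences of a symbol `a` tile the cycle, so they sum to `N`. Hence the
mean of every admissible binary cycle is `2`, and minimising the variance means minimising
`∑ Δ(j)²` fiber by fiber. On a fiber of size `n` the gaps sum to `N`, so Cauchy–Schwarz gives
`∑ Δ(j)² ≥ N² / n`, with equality for equally spaced occurrences, and `(Δ - 1)(Δ - 2) ≥ 0` gives
`∑ Δ(j)² ≥ 3N - 2n`, with equality when all gaps are `1` or `2`. The block cycle spaces its `a₂`'s
equally and leaves gaps of at most `2` between its `a₁`'s, so it attains both bounds.
-/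

section CycleDist

variable {N : ℕ} {A : Type*} (C : ZMod N → A)

theorem cycleDist_le_of_apply_add {j : ZMod N} {d : ℕ} (hd : 0 < d) (h : C (j + d) = C j) :
    cycleDist C j ≤ d :=
  Nat.sInf_le ⟨hd, h⟩

theorem apply_add_ne_of_lt_cycleDist {j : ZMod N} {d : ℕ} (hd : 0 < d) (h : d < cycleDist C j) :
    C (j + d) ≠ C j :=
  fun h' => (cycleDist_le_of_apply_add C hd h').not_gt h

theorem eq_of_add_eq_add_of_lt_cycleDist {j j' : ZMod N} {s s' : ℕ} (hC : C j = C j')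
    (hs : s ≤ s') (hs' : s' < cycleDist C j') (h : j + s = j' + s') : s = s' := by
  by_contra hne
  refine apply_add_ne_of_lt_cycleDist C (j := j') (d := s' - s) (by omega) (by omega) ?_
  have hj : j' + ((s' - s : ℕ) : ZMod N) = j := by
    rw [Nat.cast_sub hs]
    linear_combination -h
  rw [hj, hC]

variable [NeZero N]

theorem cycleDist_pos_and_apply_add (j : ZMod N) :
    0 < cycleDist C j ∧ C (j + cycleDist C j) = C j :=
  Nat.sInf_mem (s := {d : ℕ | 0 < d ∧ C (j + d) = C j}) ⟨N, NeZero.pos N, by simp⟩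

theorem cycleDist_pos (j : ZMod N) : 0 < cycleDist C j :=
  (cycleDist_pos_and_apply_add C j).1

theorem apply_add_cycleDist (j : ZMod N) : C (j + cycleDist C j) = C j :=
  (cycleDist_pos_and_apply_add C j).2

variable [DecidableEq A]

/-- `(j, s) ↦ j + s` is a bijection from `{(j, s) | C j = a, s < Δ(j)}` onto the cycle: every
position lies in exactly one gap, the one starting at the last occurrence of `a` before it. -/
theorem sum_cycleDist_fiber {a : A} (ha : ∃ j, C j = a) :
    ∑ j with C j = a, cycleDist C j = N := by
  calc ∑ j with C j = a, cycleDist C j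
      = #(({j | C j = a} : Finset (ZMod N)).sigma fun j => range (cycleDist C j)) := by
        simp [card_sigma]
    _ = #(univ : Finset (ZMod N)) := by
        refine card_bij (fun p _ => p.1 + p.2) (by simp) ?_ ?_
        · rintro ⟨j, s⟩ hp ⟨j', s'⟩ hp' (h : j + s = j' + s')
          simp only [mem_sigma, mem_filter, mem_univ, true_and, mem_range] at hp hp'
          obtain rfl : s = s' := (le_total s s').elim
            (fun hle => eq_of_add_eq_add_of_lt_cycleDist C (hp.1.trans hp'.1.symm) hle hp'.2 h)
            (fun hle => (eq_of_add_eq_add_of_lt_cycleDist C (hp'.1.trans hp.1.symm) hle hp.2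
              h.symm).symm)
          obtain rfl : j = j' := add_right_cancel h
          rfl
        · intro k _
          obtain ⟨j₀, hj₀⟩ := ha
          have hex : ∃ t : ℕ, C (k - t) = a := ⟨(k - j₀).val, by simp [hj₀]⟩
          refine ⟨⟨k - Nat.find hex, Nat.find hex⟩, ?_, by simp⟩
          simp only [mem_sigma, mem_filter, mem_univ, true_and, mem_range]
          refine ⟨Nat.find_spec hex, not_le.1 fun hle => ?_⟩
          have hpos := cycleDist_pos C (k - Nat.find hex)
          refine Nat.find_min hex (m := Nat.find hex - cycleDist C (k - Nat.find hex))
            (by omega) ?_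
          rw [Nat.cast_sub hle, sub_sub_eq_add_sub, add_sub_right_comm, apply_add_cycleDist C,
            Nat.find_spec hex]
    _ = N := by simp

theorem card_fiber_mul_of_cycleDist_eq {a : A} (ha : ∃ j, C j = a) {c : ℕ}
    (hc : ∀ j, C j = a → cycleDist C j = c) : #{j | C j = a} * c = N := by
  calc #{j | C j = a} * c = ∑ j with C j = a, cycleDist C j := by
        rw [sum_congr rfl fun j hj => hc j (mem_filter.1 hj).2, sum_const, smul_eq_mul]
    _ = N := sum_cycleDist_fiber C ha

theorem sq_le_card_mul_sum_sq_cycleDist {a : A} (ha : ∃ j, C j = a) :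
    N ^ 2 ≤ #{j | C j = a} * ∑ j with C j = a, cycleDist C j ^ 2 := by
  simpa [sum_cycleDist_fiber C ha] using
    sq_sum_le_card_mul_sum_sq (s := {j | C j = a}) (f := cycleDist C)

theorem three_mul_le_sum_sq_cycleDist {a : A} (ha : ∃ j, C j = a) :
    3 * N ≤ ∑ j with C j = a, cycleDist C j ^ 2 + 2 * #{j | C j = a} := by
  have hpoint (x : ℕ) : 3 * x ≤ x ^ 2 + 2 := by
    rcases Nat.lt_or_ge x 3 with hx | hx
    · interval_cases x <;> norm_num
    · nlinarith
  calc 3 * N = ∑ j with C j = a, 3 * cycleDist C j := by rw [← mul_sum, sum_cycleDist_fiber C ha]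
    _ ≤ ∑ j with C j = a, (cycleDist C j ^ 2 + 2) := sum_le_sum fun j _ => hpoint _
    _ = _ := by rw [sum_add_distrib, sum_const, smul_eq_mul, mul_comm]

theorem sum_sq_cycleDist_add_eq_of_le_two {a : A} (ha : ∃ j, C j = a)
    (h : ∀ j, C j = a → cycleDist C j ≤ 2) :
    ∑ j with C j = a, cycleDist C j ^ 2 + 2 * #{j | C j = a} = 3 * N := by
  have hpoint : ∀ j ∈ ({j | C j = a} : Finset (ZMod N)),
      cycleDist C j ^ 2 + 2 = 3 * cycleDist C j := by
    intro j hj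
    have h1 := cycleDist_pos C j
    have h2 := h j (mem_filter.1 hj).2
    interval_cases cycleDist C j <;> rfl
  calc ∑ j with C j = a, cycleDist C j ^ 2 + 2 * #{j | C j = a}
      = ∑ j with C j = a, 3 * cycleDist C j := by
        rw [← sum_congr rfl hpoint, sum_add_distrib, sum_const, smul_eq_mul, mul_comm]
    _ = 3 * N := by rw [← mul_sum, sum_cycleDist_fiber C ha]

end CycleDist

section Optimality

variable {N : ℕ} [NeZero N] {A : Type*} [Fintype A] [DecidableEq A]

theorem Admissible.surjective {m : A → ℕ} {C : ZMod N → A} (hC : Admissible m C)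
    (hm : ∀ a, 0 < m a) : Function.Surjective C := fun a => by
  obtain ⟨j, hj⟩ := card_pos.1 ((hm a).trans_eq (hC a).symm)
  exact ⟨j, (mem_filter.1 hj).2⟩

theorem sum_cycleDist_of_surjective {C : ZMod N → A} (hC : Function.Surjective C) :
    ∑ j, cycleDist C j = Fintype.card A * N := by
  rw [← sum_fiberwise univ C, sum_congr rfl fun a _ => sum_cycleDist_fiber C (hC a), sum_const,
    card_univ, smul_eq_mul]

theorem cycleMean_of_surjective {C : ZMod N → A} (hC : Function.Surjective C) :
    cycleMean C = Fintype.card A := by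
  have hN : (N : ℚ) ≠ 0 := NeZero.ne _
  rw [cycleMean, ← Nat.cast_sum, sum_cycleDist_of_surjective hC]
  field_simp
  push_cast
  ring

omit [Fintype A] [DecidableEq A] in
theorem cycleVariance_eq_cycleMoment2_sub_sq (C : ZMod N → A) :
    cycleVariance C = cycleMoment2 C - cycleMean C ^ 2 := by
  have hN : (N : ℚ) ≠ 0 := NeZero.ne _
  have hsum : ∑ j, (cycleDist C j : ℚ) = N * cycleMean C := by
    rw [cycleMean]
    field_simp
  simp only [cycleVariance, cycleMoment2, sub_sq, sum_add_distrib, sum_sub_distrib, ← sum_mul,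
    ← mul_sum, hsum, sum_const, card_univ, ZMod.card, nsmul_eq_mul]
  field_simp
  ring

omit [Fintype A] in
theorem sum_sq_cycleDist_fiber_le {C C' : ZMod N → A} {a a' : A} (ha : ∃ j, C j = a)
    (ha' : ∃ j, C' j = a') (hcard : #{j | C j = a} = #{j | C' j = a'})
    (hC : (∃ c, ∀ j, C j = a → cycleDist C j = c) ∨ ∀ j, C j = a → cycleDist C j ≤ 2) :
    ∑ j with C j = a, cycleDist C j ^ 2 ≤ ∑ j with C' j = a', cycleDist C' j ^ 2 := by
  rcases hC with ⟨c, hc⟩ | hle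
  · have hn : 0 < #{j | C j = a} := card_pos.2 (by obtain ⟨j, hj⟩ := ha; exact ⟨j, by simpa⟩)
    have hsum : ∑ j with C j = a, cycleDist C j ^ 2 = #{j | C j = a} * c ^ 2 := by
      rw [sum_congr rfl fun j hj => by rw [hc j (mem_filter.1 hj).2], sum_const, smul_eq_mul]
    refine le_of_mul_le_mul_left ?_ hn
    calc #{j | C j = a} * ∑ j with C j = a, cycleDist C j ^ 2
        = (#{j | C j = a} * c) ^ 2 := by rw [hsum]; ring
      _ = N ^ 2 := by rw [card_fiber_mul_of_cycleDist_eq C ha hc]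
      _ ≤ _ := hcard ▸ sq_le_card_mul_sum_sq_cycleDist C' ha'
  · have h := sum_sq_cycleDist_add_eq_of_le_two C ha hle
    have h' := three_mul_le_sum_sq_cycleDist C' ha'
    omega

theorem cycleVariance_le_of_forall_fiber {m : A → ℕ} (hm : ∀ a, 0 < m a) {C C' : ZMod N → A}
    (hC : Admissible m C) (hC' : Admissible m C')
    (hfib : ∀ a, (∃ c, ∀ j, C j = a → cycleDist C j = c) ∨ ∀ j, C j = a → cycleDist C j ≤ 2) :
    cycleVariance C ≤ cycleVariance C' := by
  have hsurj := hC.surjective hm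
  have hsurj' := hC'.surjective hm
  have hsq : ∑ j, cycleDist C j ^ 2 ≤ ∑ j, cycleDist C' j ^ 2 := by
    rw [← sum_fiberwise univ C, ← sum_fiberwise univ C']
    exact sum_le_sum fun a _ =>
      sum_sq_cycleDist_fiber_le (hsurj a) (hsurj' a) ((hC a).trans (hC' a).symm) (hfib a)
  rw [cycleVariance_eq_cycleMoment2_sub_sq, cycleVariance_eq_cycleMoment2_sub_sq,
    cycleMean_of_surjective hsurj, cycleMean_of_surjective hsurj', cycleMoment2, cycleMoment2]
  have hsqQ : ∑ j, (cycleDist C j : ℚ) ^ 2 ≤ ∑ j, (cycleDist C' j : ℚ) ^ 2 := by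
    exact_mod_cast hsq
  exact sub_le_sub_right (div_le_div_of_nonneg_right hsqQ (Nat.cast_nonneg N)) _

end Optimality

theorem ZMod.val_add_natCast_mod_of_dvd {N k : ℕ} [NeZero N] (hk : k ∣ N) (j : ZMod N) (d : ℕ) :
    (j + d).val % k = (j.val % k + d) % k := by
  rw [ZMod.val_add, ZMod.val_natCast, Nat.mod_mod_of_dvd _ hk]
  exact (Nat.mod_modEq _ k).symm.add ((Nat.mod_modEq d N).of_dvd hk)

section BlockCycle

variable {N q : ℕ} [NeZero N] {C : ZMod N → Fin 2} (hq : q + 1 ∣ N)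
  (hC : ∀ j : ZMod N, C j = if j.val % (q + 1) = q then 1 else 0)
include hC

omit [NeZero N] in
theorem block_eq_one_iff (j : ZMod N) : C j = 1 ↔ j.val % (q + 1) = q := by
  rw [hC]
  split_ifs <;> simp_all

omit [NeZero N] in
theorem block_eq_zero_iff (j : ZMod N) : C j = 0 ↔ j.val % (q + 1) ≠ q := by
  rw [hC]
  split_ifs <;> simp_all

include hq

theorem cycleDist_block_of_eq_one {j : ZMod N} (hj : C j = 1) : cycleDist C j = q + 1 := by
  have hret (d : ℕ) : C (j + d) = C j ↔ (q + d) % (q + 1) = q := by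
    rw [hj, block_eq_one_iff hC, ZMod.val_add_natCast_mod_of_dvd hq, (block_eq_one_iff hC j).1 hj]
  refine le_antisymm (cycleDist_le_of_apply_add C (by omega) ((hret _).2 ?_)) ?_
  · rw [Nat.add_mod_right, Nat.mod_eq_of_lt (Nat.lt_succ_self q)]
  · by_contra! hlt
    have hpos := cycleDist_pos C j
    have h := (hret _).1 (apply_add_cycleDist C j)
    rw [show q + cycleDist C j = cycleDist C j - 1 + (q + 1) by omega, Nat.add_mod_right,
      Nat.mod_eq_of_lt (by omega)] at h
    omega

theorem cycleDist_block_le_two_of_eq_zero (hq₁ : 1 ≤ q) {j : ZMod N} (hj : C j = 0) :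
    cycleDist C j ≤ 2 := by
  have hr := (block_eq_zero_iff hC j).1 hj
  have hlt : j.val % (q + 1) < q + 1 := Nat.mod_lt _ (Nat.succ_pos q)
  rcases Nat.lt_or_ge (j.val % (q + 1) + 1) q with h | h
  · refine (cycleDist_le_of_apply_add C one_pos ?_).trans one_le_two
    rw [hj, block_eq_zero_iff hC, ZMod.val_add_natCast_mod_of_dvd hq, Nat.mod_eq_of_lt (by omega)]
    omega
  · refine cycleDist_le_of_apply_add C two_pos ?_
    rw [hj, block_eq_zero_iff hC, ZMod.val_add_natCast_mod_of_dvd hq,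
      show j.val % (q + 1) + 2 = q + 1 by omega, Nat.mod_self]
    omega

omit hq in
theorem admissible_block {m : ℕ} (hN : N = m * (q + 1)) (hm : 0 < m) :
    Admissible ![m * q, m] C := by
  have hq : q + 1 ∣ N := hN ▸ dvd_mul_left _ _
  have hq_mem : ∃ j, C j = 1 :=
    ⟨q, by rw [block_eq_one_iff hC, ZMod.val_natCast_of_lt (by nlinarith), Nat.mod_eq_of_lt
      (Nat.lt_succ_self q)]⟩
  have h₁ : #{j | C j = 1} = m := by
    have := card_fiber_mul_of_cycleDist_eq C hq_mem fun j => cycleDist_block_of_eq_one hq hC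
    exact Nat.eq_of_mul_eq_mul_right (Nat.succ_pos q) (this.trans hN)
  have h₀₁ : #{j | C j = 0} + #{j | C j = 1} = N := by
    rw [← Fin.sum_univ_two (fun a => #{j | C j = a}), ← card_eq_sum_card_fiberwise (by simp),
      card_univ, ZMod.card]
  refine Fin.forall_fin_two.2 ⟨?_, ?_⟩
  · simp only [Matrix.cons_val_zero]
    rw [h₁] at h₀₁
    linarith
  · simpa using h₁

end BlockCycle

/-- Divisible binary case: with `m₂ ∣ m₁` and `q = m₁/m₂`, the cycle repeating the block
`a₁^q a₂` exactly `m₂` times is admissible, every instance of `a₂` has distance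
`q + 1 = N/m₂`, and it minimizes the variance over all admissible cycles. -/
theorem divisible_binary_optimal (m₁ m₂ : ℕ) (h2 : 1 ≤ m₂) (h12 : m₂ ≤ m₁) (hdvd : m₂ ∣ m₁)
    (q : ℕ) (hq : q = m₁ / m₂) (N : ℕ) (hN : N = m₁ + m₂) [NeZero N]
    (C : ZMod N → Fin 2)
    (hCdef : ∀ j : ZMod N, C j = if j.val % (q + 1) = q then 1 else 0) :
    Admissible ![m₁, m₂] C ∧
    q + 1 = N / m₂ ∧
    (∀ j : ZMod N, C j = 1 → cycleDist C j = q + 1) ∧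
    (∀ C' : ZMod N → Fin 2, Admissible ![m₁, m₂] C' →
      cycleVariance C ≤ cycleVariance C') := by
  obtain rfl : m₁ = m₂ * q := by rw [hq, Nat.mul_div_cancel' hdvd]
  have hN' : N = m₂ * (q + 1) := by rw [hN]; ring
  have hqN : q + 1 ∣ N := hN' ▸ dvd_mul_left _ _
  have hq₁ : 1 ≤ q := by nlinarith
  have hdist₁ (j : ZMod N) : C j = 1 → cycleDist C j = q + 1 :=
    cycleDist_block_of_eq_one hqN hCdef
  have hadm := admissible_block hCdef hN' h2
  refine ⟨hadm, by rw [hN', Nat.mul_div_cancel_left _ h2], hdist₁, fun C' hC' => ?_⟩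
  refine cycleVariance_le_of_forall_fiber (Fin.forall_fin_two.2 ⟨?_, ?_⟩) hadm hC'
    (Fin.forall_fin_two.2 ⟨Or.inr fun j => cycleDist_block_le_two_of_eq_zero hqN hCdef hq₁,
      Or.inl ⟨q + 1, hdist₁⟩⟩)
  · exact Nat.mul_pos h2 hq₁
  · exact h2
end
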